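/- Lemma 2.3, first part (compatibility of rotation and translation fields across an edge). Let p_i, p_j ∈ ℝ³ with p_i ≠ p_j, and let r, r′, t, t′ ∈ ℝ³ satisfy r × p_i + t = r′ × p_i + t′ and r × p_j + t = r′ × p_j + t′ (the two trivial infinitesimal motions agree at both endpoints of the edge). Then there exists a scalar s ∈ ℝ such that r − r′ = s·(p_j − p_i) and t − t′ = s·(p_i × p_j). -/
import Mathlib


noncomputable section

/-- Cross product on `ℝ³`. -/
def cross3 (x y : Fin 3 → ℝ) : Fin 3 → ℝ :=
  ![x 1 * y 2 - x 2 * y 1, x 2 * y 0 - x 0 * y 2, x 0 * y 1 - x 1 * y 0]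

lemma cross3_parallel (a v : Fin 3 → ℝ) (hv : v ≠ 0)
    (h : cross3 a v = 0) : ∃ s : ℝ, a = s • v := by
  have h0 := congrFun h 0
  have h1 := congrFun h 1
  have h2 := congrFun h 2
  simp [cross3] at h0 h1 h2
  have hv' : v 0 ≠ 0 ∨ v 1 ≠ 0 ∨ v 2 ≠ 0 := by
    by_contra hc
    push_neg at hc
    apply hv
    funext i
    fin_cases i <;> simp [hc.1, hc.2.1, hc.2.2]
  rcases hv' with h' | h' | h'
  · refine ⟨a 0 / v 0, ?_⟩
    funext i
    fin_cases i <;> simp <;> field_simp <;> nlinarith [h0, h1, h2]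
  · refine ⟨a 1 / v 1, ?_⟩
    funext i
    fin_cases i <;> simp <;> field_simp <;> nlinarith [h0, h1, h2]
  · refine ⟨a 2 / v 2, ?_⟩
    funext i
    fin_cases i <;> simp <;> field_simp <;> nlinarith [h0, h1, h2]

/-- Lemma 2.3, first part: if two Killing fields `x ↦ r × x + t` and `x ↦ r′ × x + t′`
agree at both endpoints of an edge `p_i p_j`, then `r − r′ = s·(p_j − p_i)` and
`t − t′ = s·(p_i × p_j)` for some scalar `s`. -/
theorem rotation_translation_compatibility
    (pi pj : Fin 3 → ℝ) (hne : pi ≠ pj)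
    (r r' t t' : Fin 3 → ℝ)
    (hi : cross3 r pi + t = cross3 r' pi + t')
    (hj : cross3 r pj + t = cross3 r' pj + t') :
    ∃ s : ℝ, r - r' = s • (pj - pi) ∧ t - t' = s • cross3 pi pj := by
  set d : Fin 3 → ℝ := r - r' with hd
  have hcross : cross3 d (pj - pi) = 0 := by
    funext k
    have hik := congrFun hi k
    have hjk := congrFun hj k
    fin_cases k <;>
      · simp [cross3, hd] at hik hjk ⊢
        linear_combination hjk - hik
  have hvne : pj - pi ≠ 0 := by
    intro h
    apply hne
    funext k
    have := congrFun h k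
    simp [sub_eq_zero] at this
    exact this.symm
  obtain ⟨s, hs⟩ := cross3_parallel d (pj - pi) hvne hcross
  refine ⟨s, hs, ?_⟩
  funext k
  have hik := congrFun hi k
  have hsk0 := congrFun hs 0
  have hsk1 := congrFun hs 1
  have hsk2 := congrFun hs 2
  simp [hd] at hsk0 hsk1 hsk2
  fin_cases k
  · simp [cross3] at hik ⊢
    linear_combination hik - pi 2 * hsk1 + pi 1 * hsk2
  · simp [cross3] at hik ⊢
    linear_combination hik - pi 0 * hsk2 + pi 2 * hsk0
  · simp [cross3] at hik ⊢
    linear_combination hik - pi 1 * hsk0 + pi 0 * hsk1
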